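/- For every nonzero c ∈ ℂ and any a ∈ ℂ with a⁶ = c⁻¹, the ℂ-algebra map (x,y,z,t) ↦ (a⁶x, a⁻⁶y, a³z, a²t) induces an isomorphism ℂ[x,y,z,t]/(x²y+z²+x+t³-c) ≅ ℂ[x,y,z,t]/(x²y+z²+x+t³-1). -/

import Mathlib

/-!
`P` is weighted homogeneous of degree 6 for the weights `(6, -6, 3, 2)`, so the diagonal
automorphism `Xᵢ ↦ a^{wᵢ} Xᵢ` multiplies it by `a⁶`. Hence it sends `P - 1` to
`a⁶ (P - a⁻⁶) = a⁶ (P - c)`, a unit multiple, and so maps the ideal `(P - 1)` onto `(P - c)`.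
-/

open MvPolynomial

/-- P = x²y + z² + x + t³ -/
noncomputable def KRP : MvPolynomial (Fin 4) ℂ :=
  X 0 ^ 2 * X 1 + X 2 ^ 2 + X 0 + X 3 ^ 3

theorem Ideal.span_singleton_eq_map_of_map_eq_unit_mul {A B F : Type*} [CommSemiring A]
    [CommSemiring B] [FunLike F A B] [RingHomClass F A B] (f : F) {p : A} {q u : B}
    (hu : IsUnit u) (h : f p = u * q) : span {q} = (span {p}).map f := by
  rw [map_span, Set.image_singleton, h, span_singleton_mul_left_unit hu]

theorem prod_zpow_eq_zpow_weight {σ G : Type*} [CommGroup G] (u : G) (w : σ → ℤ)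
    (d : σ →₀ ℕ) : (d.prod fun i k => (u ^ w i) ^ k) = u ^ Finsupp.weight w d := by
  classical
  rw [Finsupp.weight_apply, Finsupp.sum, Finsupp.prod]
  induction d.support using Finset.induction_on with
  | empty => simp
  | insert i s hi ih =>
    rw [Finset.sum_insert hi, Finset.prod_insert hi, zpow_add, ih, ← zpow_natCast, ← zpow_mul,
      nsmul_eq_mul, mul_comm (w i)]

namespace MvPolynomial

variable {σ R : Type*} [CommSemiring R]

noncomputable def scaleVars (s : σ → Rˣ) : MvPolynomial σ R ≃ₐ[R] MvPolynomial σ R :=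
  AlgEquiv.ofAlgHom (aeval fun i => C (s i : R) * X i) (aeval fun i => C (↑(s i)⁻¹ : R) * X i)
    (algHom_ext fun i => by
      simp only [AlgHom.comp_apply, aeval_X, map_mul, aeval_C, algebraMap_eq, AlgHom.id_apply]
      rw [← mul_assoc, ← C_mul, Units.inv_mul, C_1, one_mul])
    (algHom_ext fun i => by
      simp only [AlgHom.comp_apply, aeval_X, map_mul, aeval_C, algebraMap_eq, AlgHom.id_apply]
      rw [← mul_assoc, ← C_mul, Units.mul_inv, C_1, one_mul])

@[simp]
theorem scaleVars_X (s : σ → Rˣ) (i : σ) : scaleVars s (X i) = C (s i : R) * X i :=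
  aeval_X _ _

theorem scaleVars_monomial (s : σ → Rˣ) (d : σ →₀ ℕ) (r : R) :
    scaleVars s (monomial d r) = C (↑(d.prod fun i k => s i ^ k) : R) * monomial d r := by
  have hs : (↑(d.prod fun i k => s i ^ k) : R) = d.prod fun i k => (s i : R) ^ k :=
    map_finsuppProd (Units.coeHom R) _ _
  change aeval _ _ = _
  rw [aeval_monomial, algebraMap_eq, monomial_eq, hs]
  simp only [mul_pow, Finsupp.prod_mul, ← map_pow, ← map_finsuppProd]
  ring

theorem IsWeightedHomogeneous.scaleVars_zpow {w : σ → ℤ} {n : ℤ} {p : MvPolynomial σ R}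
    (hp : p.IsWeightedHomogeneous w n) (u : Rˣ) :
    scaleVars (fun i => u ^ w i) p = C (↑(u ^ n) : R) * p := by
  induction hp using IsWeightedHomogeneous.induction_on with
  | zero => simp
  | add p q _ _ hp hq => rw [map_add, hp, hq, mul_add]
  | monomial d r hd => rw [scaleVars_monomial, prod_zpow_eq_zpow_weight, hd]

end MvPolynomial

theorem isWeightedHomogeneous_KRP : KRP.IsWeightedHomogeneous ![6, -6, 3, 2] (6 : ℤ) := by
  have hX := isWeightedHomogeneous_X ℂ (![6, -6, 3, 2] : Fin 4 → ℤ)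
  exact (((((hX 0).pow 2).mul (hX 1)).add ((hX 2).pow 2)).add (hX 0)).add ((hX 3).pow 3)

theorem stmt5 (c a : ℂ) (hc : c ≠ 0) (ha : a ^ 6 = c⁻¹) :
    ∃ e : (MvPolynomial (Fin 4) ℂ ⧸ Ideal.span {KRP - C 1}) ≃ₐ[ℂ]
        (MvPolynomial (Fin 4) ℂ ⧸ Ideal.span {KRP - C c}),
      ∀ f : MvPolynomial (Fin 4) ℂ,
        e (Ideal.Quotient.mk _ f) =
          Ideal.Quotient.mk _
            (aeval ![C (a ^ 6) * X 0, C (a⁻¹ ^ 6) * X 1, C (a ^ 3) * X 2, C (a ^ 2) * X 3] f) := by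
  have ha0 : a ≠ 0 := by
    rintro rfl
    simp [eq_comm, hc] at ha
  set u := Units.mk0 a ha0
  set e := scaleVars fun i => u ^ (![6, -6, 3, 2] : Fin 4 → ℤ) i
  have he : aeval ![C (a ^ 6) * X 0, C (a⁻¹ ^ 6) * X 1, C (a ^ 3) * X 2, C (a ^ 2) * X 3] =
      e.toAlgHom :=
    algHom_ext fun i => by fin_cases i <;> simp [e, u]
  have hP : e (KRP - C 1) = C (a ^ 6) * (KRP - C c) := by
    have hac : a ^ 6 * c = 1 := by rw [ha, inv_mul_cancel₀ hc]
    rw [map_sub, isWeightedHomogeneous_KRP.scaleVars_zpow, C_1, map_one, mul_sub, ← C_mul, hac,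
      C_1]
    simp [u]
  refine ⟨Ideal.quotientEquivAlg _ _ e (Ideal.span_singleton_eq_map_of_map_eq_unit_mul _
    ((isUnit_iff_ne_zero.mpr (pow_ne_zero 6 ha0)).map C) hP), fun f => ?_⟩
  rw [he]
  rfl
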